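/- Let ρ, σ be positive semidefinite matrices such that the kernel of σ is contained in the kernel of ρ. Then the set {λ ∈ ℝ : λ ≥ 0 and ρ ≤ λ·σ} has a least element λ*, and λ* = sup { tr(Xρ) : X positive semidefinite with tr(Xσ) ≤ 1 }, with this supremum attained by some such X. -/

import Mathlib

open scoped Classical ComplexOrder Kronecker
open Matrix

noncomputable section

variable {n : Type*} [Fintype n] [DecidableEq n]

/-- Real part of the trace. -/
def rtr (A : Matrix n n ℂ) : ℝ := (A.trace).re

/-- Löwner order: `loewnerLE A B` iff `B - A` is positive semidefinite. -/
def loewnerLE (A B : Matrix n n ℂ) : Prop := (B - A).PosSemidef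

/-- Port: `Matrix.PosSemidef.sqrt` was removed from Mathlib; restored with its old definition. -/
def Matrix.PosSemidef.sqrt {𝕜 : Type*} [RCLike 𝕜] {A : Matrix n n 𝕜} (hA : A.PosSemidef) :
    Matrix n n 𝕜 :=
  hA.1.eigenvectorUnitary.1 * diagonal ((↑) ∘ (Real.sqrt ·) ∘ hA.1.eigenvalues) *
    (star hA.1.eigenvectorUnitary : Matrix n n 𝕜)

/-- Positive semidefinite square root of a PSD matrix (junk value `0` otherwise). -/
def msqrt (A : Matrix n n ℂ) : Matrix n n ℂ :=
  if h : A.PosSemidef then h.sqrt else 0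

/-- Trace norm `‖A‖₁ = tr √(Aᴴ A)`. -/
def traceNorm (A : Matrix n n ℂ) : ℝ :=
  rtr (Matrix.posSemidef_conjTranspose_mul_self A).sqrt

/-- Generalized fidelity for sub-normalized states. -/
def genFid (ρ σ : Matrix n n ℂ) : ℝ :=
  (traceNorm (msqrt ρ * msqrt σ) + Real.sqrt ((1 - rtr ρ) * (1 - rtr σ))) ^ 2

/-- Purified distance. -/
def purDist (ρ σ : Matrix n n ℂ) : ℝ := Real.sqrt (1 - genFid ρ σ)

/-- Trace distance. -/
def traceDist (ρ σ : Matrix n n ℂ) : ℝ := traceNorm (ρ - σ) / 2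

/-- Max-divergence `D_max(ρ‖σ) = inf {λ : ρ ≤ 2^λ σ}` (Löwner order). -/
def Dmax (ρ σ : Matrix n n ℂ) : ℝ :=
  sInf {lam : ℝ | loewnerLE ρ (((2 : ℝ) ^ lam) • σ)}

/-- Smoothed max-divergence with purified-distance smoothing over sub-normalized states. -/
def DmaxSmoothP (ε : ℝ) (ρ σ : Matrix n n ℂ) : ℝ :=
  sInf {d : ℝ | ∃ ρ' : Matrix n n ℂ,
    ρ'.PosSemidef ∧ rtr ρ' ≤ 1 ∧ purDist ρ ρ' ≤ ε ∧ d = Dmax ρ' σ}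

/-- Hypothesis testing divergence
`D_h^ε(ρ‖σ) = -log sup {tr (Λ σ) : 0 ≤ Λ ≤ 1, tr (Λ ρ) ≥ 1 - ε}`. -/
def Dh (ε : ℝ) (ρ σ : Matrix n n ℂ) : ℝ :=
  - Real.logb 2 (sSup {x : ℝ | ∃ L : Matrix n n ℂ,
      L.PosSemidef ∧ loewnerLE L 1 ∧ 1 - ε ≤ rtr (L * ρ) ∧ x = rtr (L * σ)})

/-- Real power of a Hermitian matrix, defined spectrally (junk value `0` if not Hermitian). -/
def hpow (A : Matrix n n ℂ) (t : ℝ) : Matrix n n ℂ :=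
  if h : A.IsHermitian then
    (h.eigenvectorUnitary : Matrix n n ℂ) *
      Matrix.diagonal (fun i => ((h.eigenvalues i ^ t : ℝ) : ℂ)) *
      (star (h.eigenvectorUnitary : Matrix n n ℂ))
  else 0

/-- Sandwiched Rényi divergence of order `α`. -/
def sandwichedRenyi (α : ℝ) (ρ σ : Matrix n n ℂ) : ℝ :=
  (1 / (α - 1)) * Real.logb 2
    (rtr (hpow (hpow σ ((1 - α) / (2 * α)) * ρ * hpow σ ((1 - α) / (2 * α))) α) / rtr ρ)

/-- Marginal (partial trace) on the first factor. -/
def margA {A B : Type*} [Fintype A] [Fintype B] (ρ : Matrix (A × B) (A × B) ℂ) :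
    Matrix A A ℂ :=
  Matrix.of fun a a' => ∑ b : B, ρ (a, b) (a', b)

/-- Marginal (partial trace) on the second factor. -/
def margB {A B : Type*} [Fintype A] [Fintype B] (ρ : Matrix (A × B) (A × B) ℂ) :
    Matrix B B ℂ :=
  Matrix.of fun b b' => ∑ a : A, ρ (a, b) (a, b')

end

/-!
Diagonalising `σ` shows that `ker σ ⊆ ker ρ` forces `ρ ≤ c • σ` for some `c`, so
`{l ≥ 0 | ρ ≤ l • σ}` is a nonempty closed half-line with a least element `λ`. Weak duality
`tr (X ρ) ≤ λ tr (X σ) ≤ λ` is `tr (X (λ σ - ρ)) ≥ 0`. For attainment with `λ > 0`, minimality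
yields `v` with `(λ σ - ρ) v = 0` but `σ v ≠ 0` (otherwise the same kernel bound gives
`σ ≤ c (λ σ - ρ)`, i.e. `ρ ≤ (λ - 1/c) σ`), and `X = |v⟩⟨v| / ⟨v, σ v⟩` attains `λ`.
-/

open scoped MatrixOrder

lemma exists_indicator_support_le_smul {ι : Type*} [Finite ι] {d : ι → ℝ} (hd : 0 ≤ d) :
    ∃ s : ℝ, (Function.support d).indicator 1 ≤ s • d := by
  obtain ⟨s, hs⟩ := (Set.finite_range fun i => (d i)⁻¹).bddAbove
  refine ⟨s, fun i => ?_⟩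
  by_cases hdi : d i = 0
  · simp [hdi]
  · have := mul_le_mul_of_nonneg_left (hs ⟨i, rfl⟩) (hd i)
    rw [mul_inv_cancel₀ hdi] at this
    simpa [hdi, mul_comm] using this

namespace Matrix

lemma mul_eq_zero_of_ker_le {l m n p R : Type*} [Fintype n] [NonUnitalNonAssocSemiring R]
    {A : Matrix m n R} {B : Matrix l n R} {M : Matrix n p R}
    (hker : ∀ x, A *ᵥ x = 0 → B *ᵥ x = 0) (h : A * M = 0) : B * M = 0 := by
  ext i j
  exact congrFun (hker (fun k => M k j) (funext fun i => congrFun₂ h i j)) i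

variable {n 𝕜 : Type*} [DecidableEq n] [RCLike 𝕜]

lemma diagonal_ofReal_le_diagonal_ofReal {f g : n → ℝ} :
    diagonal (fun i => (f i : 𝕜)) ≤ diagonal (fun i => (g i : 𝕜)) ↔ f ≤ g := by
  rw [le_iff, diagonal_sub, posSemidef_diagonal_iff, Pi.le_def]
  simp only [← RCLike.ofReal_sub, RCLike.ofReal_nonneg, sub_nonneg]

lemma smul_diagonal_ofReal (c : ℝ) (f : n → ℝ) :
    c • diagonal (fun i => (f i : 𝕜)) = diagonal fun i => ((c * f i : ℝ) : 𝕜) := by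
  rw [← diagonal_smul]; congr 1; ext i; simp [RCLike.real_smul_eq_coe_mul]

variable [Fintype n]

lemma IsHermitian.exists_nonneg_le_smul_one {A : Matrix n n 𝕜} (hA : A.IsHermitian) :
    ∃ t : ℝ, 0 ≤ t ∧ A ≤ t • 1 := by
  obtain ⟨t, ht⟩ := (Set.finite_range hA.eigenvalues).bddAbove
  refine ⟨max t 0, le_max_right t 0, ?_⟩
  rw [← Algebra.algebraMap_eq_smul_one]
  refine le_algebraMap_of_spectrum_le (fun x hx => ?_) hA
  rw [hA.spectrum_real_eq_range_eigenvalues] at hx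
  exact (ht hx).trans (le_max_left t 0)

lemma exists_le_smul_diagonal_of_ker_le {d : n → ℝ} (hd : 0 ≤ d) {B : Matrix n n 𝕜}
    (hB : B.IsHermitian) (hker : ∀ x, diagonal (fun i => (d i : 𝕜)) *ᵥ x = 0 → B *ᵥ x = 0) :
    ∃ c : ℝ, B ≤ c • diagonal (fun i => (d i : 𝕜)) := by
  set p : n → ℝ := (Function.support d).indicator 1
  set P : Matrix n n 𝕜 := diagonal fun i => (p i : 𝕜)
  have hBP : B * P = B := by
    have h : B * (1 - P) = 0 := mul_eq_zero_of_ker_le hker <| by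
      rw [mul_sub, mul_one, diagonal_mul_diagonal, sub_eq_zero]
      congr 1; ext i
      by_cases hdi : d i = 0 <;> simp [p, hdi]
    rwa [mul_sub, mul_one, sub_eq_zero, eq_comm] at h
  have hP : Pᴴ = P := by simp [P]
  have hPB : P * B = B := by
    simpa [conjTranspose_mul, hB.eq, hP] using congrArg conjTranspose hBP
  have hPP : P * P = P := by
    rw [diagonal_mul_diagonal]
    congr 1; ext i
    by_cases hdi : d i = 0 <;> simp [p, hdi]
  obtain ⟨t, ht, hBt⟩ := hB.exists_nonneg_le_smul_one
  obtain ⟨s, hs⟩ := exists_indicator_support_le_smul hd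
  have hPs : P ≤ s • diagonal (fun i => (d i : 𝕜)) := by
    rw [smul_diagonal_ofReal]
    exact diagonal_ofReal_le_diagonal_ofReal.mpr hs
  refine ⟨t * s, ?_⟩
  calc B = star P * B * P := by rw [star_eq_conjTranspose, hP, hPB, hBP]
    _ ≤ star P * (t • 1) * P := star_left_conjugate_le_conjugate hBt P
    _ = t • P := by rw [star_eq_conjTranspose, hP, mul_smul_comm, mul_one, smul_mul_assoc, hPP]
    _ ≤ t • s • diagonal (fun i => (d i : 𝕜)) := smul_le_smul_of_nonneg_left hPs ht
    _ = (t * s) • diagonal (fun i => (d i : 𝕜)) := by rw [smul_smul]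

lemma PosSemidef.exists_le_smul_of_ker_le {A B : Matrix n n 𝕜} (hA : A.PosSemidef)
    (hB : B.IsHermitian) (hker : ∀ x, A *ᵥ x = 0 → B *ᵥ x = 0) :
    ∃ c : ℝ, 0 < c ∧ B ≤ c • A := by
  set U : Matrix n n 𝕜 := ↑hA.1.eigenvectorUnitary
  set D : Matrix n n 𝕜 := diagonal fun i => (hA.1.eigenvalues i : 𝕜)
  have hA_eq : A = U * D * star U := hA.1.spectral_theorem
  have hUU : star U * U = 1 := Unitary.coe_star_mul_self _
  have hUU' : U * star U = 1 := Unitary.coe_mul_star_self _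
  have hker' : ∀ y, D *ᵥ y = 0 → (star U * B * U) *ᵥ y = 0 := by
    intro y hy
    have hAUy : A *ᵥ (U *ᵥ y) = 0 := by
      rw [hA_eq, mulVec_mulVec, mul_assoc _ (star U), hUU, mul_one, ← mulVec_mulVec, hy,
        mulVec_zero]
    rw [← mulVec_mulVec, ← mulVec_mulVec, hker _ hAUy, mulVec_zero]
  have hB' : (star U * B * U).IsHermitian := isHermitian_conjTranspose_mul_mul U hB
  obtain ⟨c, hc⟩ := exists_le_smul_diagonal_of_ker_le hA.eigenvalues_nonneg hB' hker'
  refine ⟨max c 1, by positivity, ?_⟩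
  calc B = star (star U) * (star U * B * U) * star U := by
        simp only [star_star, ← mul_assoc, hUU', one_mul, mul_assoc B, mul_one]
    _ ≤ star (star U) * (c • D) * star U := star_left_conjugate_le_conjugate hc _
    _ = c • A := by rw [star_star, mul_smul_comm, smul_mul_assoc, hA_eq]
    _ ≤ max c 1 • A := smul_le_smul_of_nonneg_right (le_max_left c 1) hA.nonneg

lemma PosSemidef.trace_mul_nonneg {X M : Matrix n n 𝕜} (hX : X.PosSemidef) (hM : M.PosSemidef) :
    0 ≤ (X * M).trace := by
  obtain ⟨B, rfl⟩ := CStarAlgebra.nonneg_iff_eq_star_mul_self.mp hM.nonneg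
  rw [← mul_assoc, trace_mul_cycle]
  exact (hX.mul_mul_conjTranspose_same B).trace_nonneg

lemma exists_mulVec_eq_smul_of_isLeast {ρ σ : Matrix n n 𝕜} (hσ : σ.PosSemidef)
    {lam : ℝ} (hlam : IsLeast {l : ℝ | 0 ≤ l ∧ ρ ≤ l • σ} lam) (hpos : 0 < lam) :
    ∃ v, σ *ᵥ v ≠ 0 ∧ ρ *ᵥ v = lam • σ *ᵥ v := by
  by_contra! h
  have hker : ∀ v, (lam • σ - ρ) *ᵥ v = 0 → σ *ᵥ v = 0 := fun v hv => by
    by_contra hσv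
    rw [sub_mulVec, sub_eq_zero, smul_mulVec] at hv
    exact h v hσv hv.symm
  obtain ⟨c, hc, hσc⟩ := PosSemidef.exists_le_smul_of_ker_le hlam.1.2 hσ.1 hker
  have hρc : ρ ≤ (lam - c⁻¹) • σ := by
    have := smul_le_smul_of_nonneg_left hσc (inv_nonneg.mpr hc.le)
    rw [smul_smul, inv_mul_cancel₀ hc.ne', one_smul] at this
    rw [sub_smul]
    exact le_sub_comm.mp this
  have hμ : lam ≤ max (lam - c⁻¹) 0 :=
    hlam.2 ⟨le_max_right _ _, hρc.trans (smul_le_smul_of_nonneg_right (le_max_left _ _) hσ.nonneg)⟩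
  have : max (lam - c⁻¹) 0 < lam := max_lt (by linarith [inv_pos.mpr hc]) hpos
  linarith

end Matrix

open scoped Matrix.Norms.L2Operator in
lemma isClosed_setOf_le_smul {n : Type*} [Fintype n] [DecidableEq n] (A B : Matrix n n ℂ) :
    IsClosed {l : ℝ | A ≤ l • B} :=
  isClosed_le continuous_const (continuous_id.smul continuous_const)

lemma exists_isLeast_le_smul {n : Type*} [Fintype n] [DecidableEq n] {ρ σ : Matrix n n ℂ}
    (hσ : σ.PosSemidef) (hρ : ρ.IsHermitian) (hker : ∀ x, σ *ᵥ x = 0 → ρ *ᵥ x = 0) :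
    ∃ lam, IsLeast {l : ℝ | 0 ≤ l ∧ ρ ≤ l • σ} lam := by
  obtain ⟨c, hc, hρc⟩ := hσ.exists_le_smul_of_ker_le hρ hker
  exact ⟨_, (isClosed_Ici.inter (isClosed_setOf_le_smul ρ σ)).isLeast_csInf ⟨c, hc.le, hρc⟩
    ⟨0, fun _ hl => hl.1⟩⟩

section rtr

variable {n : Type*} [Fintype n]

lemma rtr_smul (c : ℝ) (A : Matrix n n ℂ) : rtr (c • A) = c * rtr A := by
  simp [rtr, trace_smul]

lemma rtr_mul_le_rtr_mul {X A B : Matrix n n ℂ} (hX : X.PosSemidef) (h : A ≤ B) :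
    rtr (X * A) ≤ rtr (X * B) := by
  have := (Complex.le_def.mp (hX.trace_mul_nonneg h)).1
  simpa [rtr, mul_sub, trace_sub] using this

lemma rtr_vecMulVec_mul (v : n → ℂ) (A : Matrix n n ℂ) :
    rtr (vecMulVec v (star v) * A) = (star v ⬝ᵥ A *ᵥ v).re := by
  rw [rtr, vecMulVec_mul, trace_vecMulVec, dotProduct_comm, dotProduct_mulVec]

lemma rtr_mul_le_of_le_smul {X ρ σ : Matrix n n ℂ} (hX : X.PosSemidef) {lam : ℝ} (hlam : 0 ≤ lam)
    (h : ρ ≤ lam • σ) (hXσ : rtr (X * σ) ≤ 1) : rtr (X * ρ) ≤ lam :=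
  calc rtr (X * ρ) ≤ rtr (X * (lam • σ)) := rtr_mul_le_rtr_mul hX h
    _ = lam * rtr (X * σ) := by rw [Matrix.mul_smul, rtr_smul]
    _ ≤ lam := mul_le_of_le_one_right hlam hXσ

lemma exists_posSemidef_rtr_eq_of_mulVec_eq_smul {ρ σ : Matrix n n ℂ} (hσ : σ.PosSemidef)
    {lam : ℝ} {v : n → ℂ} (hσv : σ *ᵥ v ≠ 0) (hρv : ρ *ᵥ v = lam • σ *ᵥ v) :
    ∃ X : Matrix n n ℂ, X.PosSemidef ∧ rtr (X * σ) = 1 ∧ rtr (X * ρ) = lam := by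
  set q := (star v ⬝ᵥ σ *ᵥ v).re
  have hq : 0 < q := by
    have hne : star v ⬝ᵥ σ *ᵥ v ≠ 0 := mt (hσ.dotProduct_mulVec_zero_iff v).mp hσv
    exact (Complex.lt_def.mp ((hσ.dotProduct_mulVec_nonneg v).lt_of_ne hne.symm)).1
  refine ⟨q⁻¹ • vecMulVec v (star v), (posSemidef_vecMulVec_self_star v).smul (inv_nonneg.mpr hq.le),
    ?_, ?_⟩
  · rw [smul_mul_assoc, rtr_smul, rtr_vecMulVec_mul, inv_mul_cancel₀ hq.ne']
  · rw [smul_mul_assoc, rtr_smul, rtr_vecMulVec_mul, hρv, dotProduct_smul, Complex.smul_re,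
      smul_eq_mul, mul_left_comm, inv_mul_cancel₀ hq.ne', mul_one]

end rtr

theorem dmax_minimax_general
    {n : Type*} [Fintype n] [DecidableEq n]
    (ρ σ : Matrix n n ℂ) (hρ : ρ.PosSemidef) (hσ : σ.PosSemidef)
    (hker : ∀ x : n → ℂ, σ.mulVec x = 0 → ρ.mulVec x = 0) :
    ∃ lam : ℝ,
      IsLeast {l : ℝ | 0 ≤ l ∧ loewnerLE ρ (l • σ)} lam ∧
      IsGreatest {x : ℝ | ∃ X : Matrix n n ℂ,
        X.PosSemidef ∧ rtr (X * σ) ≤ 1 ∧ x = rtr (X * ρ)} lam := by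
  obtain ⟨lam, hlam⟩ := exists_isLeast_le_smul hσ hρ.1 hker
  refine ⟨lam, hlam, ?_, ?_⟩
  · rcases hlam.1.1.eq_or_lt with hzero | hpos
    · exact ⟨0, PosSemidef.zero, by simp [rtr], by simp [rtr, ← hzero]⟩
    · obtain ⟨v, hσv, hρv⟩ := exists_mulVec_eq_smul_of_isLeast hσ hlam hpos
      obtain ⟨X, hX, hXσ, hXρ⟩ := exists_posSemidef_rtr_eq_of_mulVec_eq_smul hσ hσv hρv
      exact ⟨X, hX, hXσ.le, hXρ.symm⟩
  · rintro _ ⟨X, hX, hXσ, rfl⟩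
    exact rtr_mul_le_of_le_smul hX hlam.1.1 hlam.1.2 hXσ

/-- Minimax characterization of the (non-smoothed) max-divergence:
the least `λ ≥ 0` with `ρ ≤ λ σ` exists and equals the attained supremum of `tr (X ρ)`
over PSD `X` with `tr (X σ) ≤ 1`. -/
theorem dmax_minimax
    {n : Type*} [Fintype n] [DecidableEq n] [Nonempty n]
    (ρ σ : Matrix n n ℂ) (hρ : ρ.PosSemidef) (hσ : σ.PosSemidef)
    (hker : ∀ x : n → ℂ, σ.mulVec x = 0 → ρ.mulVec x = 0) :
    ∃ lam : ℝ,
      IsLeast {l : ℝ | 0 ≤ l ∧ loewnerLE ρ (l • σ)} lam ∧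
      IsGreatest {x : ℝ | ∃ X : Matrix n n ℂ,
        X.PosSemidef ∧ rtr (X * σ) ≤ 1 ∧ x = rtr (X * ρ)} lam :=
  dmax_minimax_general ρ σ hρ hσ hker
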